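/- Let Π be a Hermitian operator with 0 ≤ Π ≤ I, and let ρ, σ be density matrices on the same space. Define C(ρ) = 1 − Tr[Π (ρ⊗ρ)]. Then |C(ρ) − C(σ)| ≤ ‖ρ − σ‖₁. -/

import Mathlib

/-!
Write `ρ - σ = Δ⁺ - Δ⁻` with `Δ^±` its positive and negative parts. Since `Tr (ρ - σ) = 0`,
both parts have trace `‖ρ - σ‖₁ / 2`. Then `ρ ⊗ ρ - σ ⊗ σ = K - L` with the positive matrices
`K = ρ ⊗ Δ⁺ + Δ⁺ ⊗ σ` and `L = ρ ⊗ Δ⁻ + Δ⁻ ⊗ σ`, both of trace `‖ρ - σ‖₁`, and `0 ≤ Π ≤ 1`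
places `Tr (Π K)` and `Tr (Π L)` in `[0, ‖ρ - σ‖₁]`.
-/

open Matrix Kronecker
open scoped ComplexOrder

/-- Trace norm of a matrix: sum of singular values, i.e. sum of square roots of
eigenvalues of `Aᴴ * A`. -/
noncomputable def traceNorm {m : Type*} [Fintype m] [DecidableEq m] (A : Matrix m m ℂ) : ℝ :=
  ∑ i, Real.sqrt ((Matrix.isHermitian_conjTranspose_mul_self A).eigenvalues i)

open scoped MatrixOrder

lemma Complex.norm_sub_le_of_nonneg_of_le {x y t : ℂ} (hx₀ : 0 ≤ x) (hx : x ≤ t)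
    (hy₀ : 0 ≤ y) (hy : y ≤ t) : ‖x - y‖ ≤ ‖t‖ := by
  rw [Complex.le_def] at hx₀ hx hy₀ hy
  have hreal : x - y = ((x.re - y.re : ℝ) : ℂ) := by
    apply Complex.ext <;> simp [← hx₀.2, ← hy₀.2]
  rw [hreal, Complex.norm_real, Real.norm_eq_abs]
  exact (abs_sub_le_of_nonneg_of_le hx₀.1 hx.1 hy₀.1 hy.1).trans (Complex.re_le_norm t)

namespace Matrix

section Kronecker

variable {n α : Type*}

lemma kronecker_self_sub_kronecker_self_of_sub_eq [CommRing α] {A B X Y : Matrix n n α}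
    (h : X - Y = A - B) :
    A ⊗ₖ A - B ⊗ₖ B = (A ⊗ₖ X + X ⊗ₖ B) - (A ⊗ₖ Y + Y ⊗ₖ B) := calc
  A ⊗ₖ A - B ⊗ₖ B = A ⊗ₖ (A - B) + (A - B) ⊗ₖ B := by
    ext; simp only [add_apply, sub_apply, kroneckerMap_apply]; ring
  _ = (A ⊗ₖ X + X ⊗ₖ B) - (A ⊗ₖ Y + Y ⊗ₖ B) := by
    rw [← h]; ext; simp only [add_apply, sub_apply, kroneckerMap_apply]; ring

lemma trace_kronecker_add_kronecker [Fintype n] [CommSemiring α] {A B : Matrix n n α}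
    (hA : A.trace = 1) (hB : B.trace = 1) (X : Matrix n n α) :
    (A ⊗ₖ X + X ⊗ₖ B).trace = 2 * X.trace := by
  rw [trace_add, trace_kronecker, trace_kronecker, hA, hB]
  ring

end Kronecker

variable {n 𝕜 : Type*} [RCLike 𝕜] [Fintype n]

lemma IsHermitian.trace_cfc [DecidableEq n] {A : Matrix n n 𝕜} (hA : A.IsHermitian)
    (f : ℝ → ℝ) : (cfc f A).trace = ∑ i, (f (hA.eigenvalues i) : 𝕜) := by
  rw [hA.cfc_eq, IsHermitian.cfc, Unitary.conjStarAlgAut_apply, trace_mul_cycle,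
    Unitary.coe_star_mul_self, one_mul, trace_diagonal]
  rfl

lemma PosSemidef.trace_mul_nonneg {P K : Matrix n n 𝕜} (hP : P.PosSemidef)
    (hK : K.PosSemidef) : 0 ≤ (P * K).trace := by
  classical
  obtain ⟨B, rfl⟩ := CStarAlgebra.nonneg_iff_eq_star_mul_self.mp hK.nonneg
  rw [star_eq_conjTranspose, ← Matrix.mul_assoc, trace_mul_cycle]
  exact (hP.mul_mul_conjTranspose_same B).trace_nonneg

lemma PosSemidef.trace_mul_le_trace [DecidableEq n] {P K : Matrix n n 𝕜}
    (hP1 : (1 - P).PosSemidef) (hK : K.PosSemidef) : (P * K).trace ≤ K.trace := by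
  simpa [Matrix.sub_mul, trace_sub] using hP1.trace_mul_nonneg hK

lemma norm_trace_mul_sub_le [DecidableEq n] {P K L : Matrix n n ℂ} (hP : P.PosSemidef)
    (hP1 : (1 - P).PosSemidef) (hK : K.PosSemidef) (hL : L.PosSemidef)
    (hKL : K.trace = L.trace) : ‖(P * (K - L)).trace‖ ≤ ‖K.trace‖ := by
  rw [Matrix.mul_sub, trace_sub]
  exact Complex.norm_sub_le_of_nonneg_of_le (hP.trace_mul_nonneg hK)
    (hP1.trace_mul_le_trace hK) (hP.trace_mul_nonneg hL) (hKL ▸ hP1.trace_mul_le_trace hL)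

end Matrix

section TraceNorm

variable {n : Type*} [Fintype n] [DecidableEq n]

lemma traceNorm_nonneg (A : Matrix n n ℂ) : 0 ≤ traceNorm A :=
  Finset.sum_nonneg fun _ _ ↦ Real.sqrt_nonneg _

lemma ofReal_traceNorm (A : Matrix n n ℂ) : (traceNorm A : ℂ) = (CFC.abs A).trace := by
  rw [CFC.abs, CFC.sqrt_eq_real_sqrt _ (star_mul_self_nonneg A), cfcₙ_eq_cfc,
    star_eq_conjTranspose, (isHermitian_conjTranspose_mul_self A).trace_cfc, traceNorm]
  push_cast
  rfl

lemma Matrix.IsHermitian.ofReal_traceNorm {A : Matrix n n ℂ} (hA : A.IsHermitian) :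
    (traceNorm A : ℂ) = (A⁺).trace + (A⁻).trace := by
  rw [_root_.ofReal_traceNorm, ← CFC.posPart_add_negPart A hA.isSelfAdjoint, trace_add]

end TraceNorm

theorem ce_trace_norm_continuity {m : Type*} [Fintype m] [DecidableEq m]
    (P : Matrix (m × m) (m × m) ℂ) (hP : P.PosSemidef) (hP1 : (1 - P).PosSemidef)
    (ρ σ : Matrix m m ℂ) (hρ : ρ.PosSemidef) (hρ1 : ρ.trace = 1)
    (hσ : σ.PosSemidef) (hσ1 : σ.trace = 1) :
    ‖(1 - (P * (ρ ⊗ₖ ρ)).trace) - (1 - (P * (σ ⊗ₖ σ)).trace)‖ ≤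
      traceNorm (ρ - σ) := by
  set Δ := ρ - σ
  have hΔ : Δ.IsHermitian := hρ.1.sub hσ.1
  have hdecomp : Δ⁺ - Δ⁻ = Δ := CFC.posPart_sub_negPart Δ hΔ.isSelfAdjoint
  have hpos : (Δ⁺).PosSemidef := (CFC.posPart_nonneg Δ).posSemidef
  have hneg : (Δ⁻).PosSemidef := (CFC.negPart_nonneg Δ).posSemidef
  have htrace : (Δ⁺).trace = (Δ⁻).trace := by
    rw [← sub_eq_zero, ← trace_sub, hdecomp, trace_sub, hρ1, hσ1, sub_self]
  have hnorm : (traceNorm Δ : ℂ) = 2 * (Δ⁺).trace := by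
    rw [hΔ.ofReal_traceNorm, ← htrace]
    ring
  calc ‖(1 - (P * (ρ ⊗ₖ ρ)).trace) - (1 - (P * (σ ⊗ₖ σ)).trace)‖
      = ‖(P * ((ρ ⊗ₖ Δ⁺ + Δ⁺ ⊗ₖ σ) - (ρ ⊗ₖ Δ⁻ + Δ⁻ ⊗ₖ σ))).trace‖ := by
        rw [← kronecker_self_sub_kronecker_self_of_sub_eq hdecomp, Matrix.mul_sub, trace_sub,
          ← norm_neg]
        congr 1; ring
    _ ≤ ‖(ρ ⊗ₖ Δ⁺ + Δ⁺ ⊗ₖ σ).trace‖ :=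
        norm_trace_mul_sub_le hP hP1 ((hρ.kronecker hpos).add (hpos.kronecker hσ))
          ((hρ.kronecker hneg).add (hneg.kronecker hσ))
          (by rw [trace_kronecker_add_kronecker hρ1 hσ1, trace_kronecker_add_kronecker hρ1 hσ1,
            htrace])
    _ = traceNorm Δ := by
        rw [trace_kronecker_add_kronecker hρ1 hσ1, ← hnorm, Complex.norm_real,
          Real.norm_of_nonneg (traceNorm_nonneg _)]
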